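/- arXiv:2010.10413 — 5 statements merged into one kernel-verified Lean document; each statement's English description precedes it below -/
import Mathlib

section
/- Let X be a finite simple graph on n vertices with complement X̄, let u ≠ v be vertices, and let τ ∈ ℝ satisfy nτ ∈ 2πℤ. If exp(iτ L(X)) e_u = α e_u + β e_v for some α, β ∈ ℂ, then exp(iτ L(X̄)) = exp(−iτ L(X)), and consequently exp(iτ L(X̄)) e_u = conj(α) e_u + conj(β) e_v; in particular X̄ admits Laplacian fractional revival (proper if β ≠ 0, and perfect state transfer if α = 0) between u and v at time τ whenever X does. -/
/-!
The complement has Laplacian `L(X̄) = nI - J - L(X)`, and `L(X)` kills the all-ones matrix `J`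
from both sides, so `nI - J` commutes with `L(X)` and
`exp(iτ L(X̄)) = exp(iτ (nI - J)) exp(-iτ L(X))`.
Since `I - J/n` is idempotent, `exp(iτ (nI - J)) = I + (e^{iτn} - 1)(I - J/n)`, which is `I`
when `nτ ∈ 2πℤ`. Finally `L(X)` is real symmetric, so `exp(-iτ L(X))` is the entrywise
conjugate of the symmetric matrix `exp(iτ L(X))`, and its `u`-th column is the conjugate of the
`u`-th column of `exp(iτ L(X))`.
-/

open Matrix

noncomputable def lapR {V : Type*} [Fintype V] [DecidableEq V] (G : SimpleGraph V) :
    Matrix V V ℝ :=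
  letI := Classical.decRel G.Adj
  G.lapMatrix ℝ

noncomputable def lapC {V : Type*} [Fintype V] [DecidableEq V] (G : SimpleGraph V) :
    Matrix V V ℂ :=
  (lapR G).map Complex.ofReal

noncomputable def transition {V : Type*} [Fintype V] [DecidableEq V] (G : SimpleGraph V)
    (t : ℝ) : Matrix V V ℂ :=
  NormedSpace.exp ((Complex.I * (t : ℂ)) • lapC G)

/-- proper Laplacian fractional revival between distinct vertices `a, b` at time `τ`. -/
def properLaFR {V : Type*} [Fintype V] [DecidableEq V] (G : SimpleGraph V) (a b : V)
    (τ : ℝ) : Prop :=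
  a ≠ b ∧ ∃ α β : ℂ, β ≠ 0 ∧
    transition G τ *ᵥ Pi.single a 1 =
      α • (Pi.single a 1 : V → ℂ) + β • (Pi.single b 1 : V → ℂ)

/-- Laplacian periodicity at vertex `a` at time `τ`. -/
def periodicAt {V : Type*} [Fintype V] [DecidableEq V] (G : SimpleGraph V) (a : V)
    (τ : ℝ) : Prop :=
  ∃ α : ℂ, transition G τ *ᵥ Pi.single a 1 = α • (Pi.single a 1 : V → ℂ)

/-- The matrix of the orthogonal projection onto the `μ`-eigenspace of the Laplacian. -/
noncomputable def eigProj {V : Type*} [Fintype V] [DecidableEq V] (G : SimpleGraph V)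
    (μ : ℝ) : Matrix V V ℝ :=
  Matrix.toEuclideanLin.symm
    ((Module.End.eigenspace (Matrix.toEuclideanLin (lapR G)) μ).subtype ∘ₗ
      (Submodule.orthogonalProjectionOnto
        (Module.End.eigenspace (Matrix.toEuclideanLin (lapR G)) μ) :
          EuclideanSpace ℝ V →L[ℝ] _).toLinearMap)

def StronglyCospectral {V : Type*} [Fintype V] [DecidableEq V] (G : SimpleGraph V)
    (a b : V) : Prop :=
  ∀ μ : ℝ, eigProj G μ *ᵥ Pi.single a 1 = eigProj G μ *ᵥ Pi.single b 1 ∨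
    eigProj G μ *ᵥ Pi.single a 1 = -(eigProj G μ *ᵥ Pi.single b 1)

def PhiPlus {V : Type*} [Fintype V] [DecidableEq V] (G : SimpleGraph V) (a b : V) :
    Set ℝ :=
  {μ | eigProj G μ *ᵥ Pi.single a 1 = eigProj G μ *ᵥ Pi.single b 1 ∧
    eigProj G μ *ᵥ Pi.single a 1 ≠ 0}

def PhiMinus {V : Type*} [Fintype V] [DecidableEq V] (G : SimpleGraph V) (a b : V) :
    Set ℝ :=
  {μ | eigProj G μ *ᵥ Pi.single a 1 = -(eigProj G μ *ᵥ Pi.single b 1) ∧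
    eigProj G μ *ᵥ Pi.single a 1 ≠ 0}

def eigSupport {V : Type*} [Fintype V] [DecidableEq V] (G : SimpleGraph V) (a : V) :
    Set ℝ :=
  {μ | eigProj G μ *ᵥ Pi.single a 1 ≠ 0}

/-- `r` is an integer multiple of the natural number `g`. -/
def intDvd (g : ℕ) (r : ℝ) : Prop := ∃ k : ℤ, r = (g : ℝ) * k

open NormedSpace in
theorem NormedSpace.exp_smul_of_isIdempotentElem {𝕂 A : Type*} [RCLike 𝕂] [NormedRing A]
    [NormedAlgebra 𝕂 A] [CompleteSpace A] {P : A} (hP : IsIdempotentElem P) (a : 𝕂) :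
    exp (a • P) = 1 + (exp a - 1) • P := by
  -- As `P ^ (n + 1) = P`, the exponential series of `a • P` is that of `a` times `P`,
  -- corrected by `1 - P` in degree `0`.
  have hsum :
      HasSum (fun n : ℕ => (n.factorial⁻¹ : 𝕂) • (a • P) ^ n) (exp a • P + (1 - P)) := by
    convert ((exp_series_hasSum_exp' (𝕂 := 𝕂) a).smul_const P).add
      (hasSum_ite_eq 0 (1 - P)) using 1
    funext n
    rcases n with _ | n
    · simp
    · simp [smul_pow, hP.pow_succ_eq, smul_smul]
  rw [(exp_series_hasSum_exp' (𝕂 := 𝕂) (a • P)).unique hsum, sub_smul, one_smul]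
  abel

theorem Matrix.of_one_mul_of_one {n R : Type*} [Fintype n] [NonAssocSemiring R] :
    (of 1 : Matrix n n R) * of 1 = (Fintype.card n : R) • of 1 := by
  ext i j
  simp [mul_apply]

open NormedSpace in
theorem Matrix.exp_smul_card_smul_one_sub_of_one {n : Type*} [Fintype n] [DecidableEq n]
    [Nonempty n] (c : ℂ) (hc : Complex.exp (c * Fintype.card n) = 1) :
    exp (c • ((Fintype.card n : ℂ) • 1 - of 1 : Matrix n n ℂ)) = 1 := by
  open scoped Norms.Operator in
  set N : ℂ := (Fintype.card n : ℂ) with hN_def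
  have hN : N ≠ 0 := Nat.cast_ne_zero.mpr Fintype.card_ne_zero
  have hP : IsIdempotentElem (1 - N⁻¹ • of 1 : Matrix n n ℂ) := by
    refine IsIdempotentElem.one_sub ?_
    rw [IsIdempotentElem, smul_mul_smul, of_one_mul_of_one, ← hN_def, smul_smul]
    field_simp
  have hsplit : c • (N • 1 - of 1 : Matrix n n ℂ) = (c * N) • (1 - N⁻¹ • of 1) := by
    rw [mul_smul, smul_sub N, smul_smul, mul_inv_cancel₀ hN, one_smul]
  calc exp (c • (N • 1 - of 1 : Matrix n n ℂ))
      _ = 1 + (exp (c * N) - 1) • (1 - N⁻¹ • of 1) :=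
        hsplit ▸ exp_smul_of_isIdempotentElem hP _
      _ = 1 := by rw [← Complex.exp_eq_exp_ℂ, hc, sub_self, zero_smul, add_zero]

namespace SimpleGraph

variable {V R : Type*} [Fintype V] [DecidableEq V] (G : SimpleGraph V) [DecidableRel G.Adj]

theorem lapMatrix_mul_of_one [NonAssocRing R] : G.lapMatrix R * of 1 = 0 := by
  ext i j
  simpa [mul_apply, mulVec, dotProduct]
    using congrFun (G.lapMatrix_mulVec_const_eq_zero (R := R)) i

theorem of_one_mul_lapMatrix [NonAssocRing R] : of 1 * G.lapMatrix R = 0 := by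
  ext i j
  simpa [mul_apply, mulVec, dotProduct, (G.isSymm_lapMatrix R).apply j]
    using congrFun (G.lapMatrix_mulVec_const_eq_zero (R := R)) j

theorem lapMatrix_compl [Ring R] :
    Gᶜ.lapMatrix R = (Fintype.card V : R) • 1 - of 1 - G.lapMatrix R := by
  ext i j
  by_cases hij : i = j
  · subst hij
    have hdeg : G.degree i < Fintype.card V := G.degree_lt_card_verts i
    simp only [lapMatrix, degMatrix, degree_compl]
    simp [Nat.cast_sub (by omega : G.degree i ≤ Fintype.card V - 1),
      Nat.cast_sub (by omega : 1 ≤ Fintype.card V)]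
  · by_cases hadj : G.Adj i j <;> simp [lapMatrix, degMatrix, hij, hadj, one_apply]

end SimpleGraph

section Transition

variable {V : Type*} [Fintype V] [DecidableEq V]

theorem lapC_eq_lapMatrix (G : SimpleGraph V) [DecidableRel G.Adj] : lapC G = G.lapMatrix ℂ := by
  have hR : lapR G = G.lapMatrix ℝ := by unfold lapR; congr
  ext i j
  by_cases hij : i = j
  · subst hij
    simp [lapC, hR, SimpleGraph.lapMatrix, SimpleGraph.degMatrix]
  · by_cases hadj : G.Adj i j <;>
      simp [lapC, hR, SimpleGraph.lapMatrix, SimpleGraph.degMatrix, hij, hadj]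

theorem lapC_isHermitian (G : SimpleGraph V) : (lapC G).IsHermitian := by
  classical
  rw [lapC_eq_lapMatrix]
  exact G.isHermitian_lapMatrix ℂ

theorem lapC_compl (G : SimpleGraph V) :
    lapC Gᶜ = (Fintype.card V : ℂ) • 1 - of 1 - lapC G := by
  classical
  rw [lapC_eq_lapMatrix, lapC_eq_lapMatrix, G.lapMatrix_compl]

theorem commute_of_one_lapC (G : SimpleGraph V) : Commute (of 1) (lapC G) := by
  classical
  rw [lapC_eq_lapMatrix, Commute, SemiconjBy, G.lapMatrix_mul_of_one, G.of_one_mul_lapMatrix]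

theorem transition_isSymm (G : SimpleGraph V) (t : ℝ) : (transition G t).IsSymm := by
  classical
  rw [transition, lapC_eq_lapMatrix]
  exact ((G.isSymm_lapMatrix ℂ).smul _).exp

theorem transition_neg (G : SimpleGraph V) (t : ℝ) : transition G (-t) = (transition G t)ᴴ := by
  rw [transition, transition, ← exp_conjTranspose, conjTranspose_smul, (lapC_isHermitian G).eq]
  congr 2
  simp [Complex.conj_I]

theorem transition_neg_mulVec_single (G : SimpleGraph V) (t : ℝ) (a : V) :
    transition G (-t) *ᵥ Pi.single a 1 = star (transition G t *ᵥ Pi.single a 1) := by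
  ext i
  simp [transition_neg, (transition_isSymm G t).apply a i]

theorem transition_compl_eq_transition_neg [Nonempty V] (G : SimpleGraph V) (t : ℝ)
    (ht : ∃ k : ℤ, (Fintype.card V : ℝ) * t = 2 * Real.pi * k) :
    transition Gᶜ t = transition G (-t) := by
  obtain ⟨k, hk⟩ := ht
  have hperiod : Complex.exp (Complex.I * t * Fintype.card V) = 1 := by
    refine Complex.exp_eq_one_iff.mpr ⟨k, ?_⟩
    have hk' : ((Fintype.card V * t : ℝ) : ℂ) = (2 * Real.pi * k : ℝ) := congrArg _ hk
    push_cast at hk'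
    linear_combination Complex.I * hk'
  have hcomm : Commute ((Complex.I * t) • ((Fintype.card V : ℂ) • 1 - of 1 : Matrix V V ℂ))
      ((-(Complex.I * t)) • lapC G) :=
    ((((Commute.one_left _).smul_left _).sub_left (commute_of_one_lapC G)).smul_left _).smul_right _
  rw [transition, lapC_compl, smul_sub, sub_eq_add_neg, ← neg_smul, exp_add_of_commute _ _ hcomm,
    exp_smul_card_smul_one_sub_of_one _ hperiod, one_mul, transition, Complex.ofReal_neg, mul_neg]

end Transition

theorem complement_transition_general {V : Type*} [Fintype V] [DecidableEq V]
    (X : SimpleGraph V) (u v : V) (τ : ℝ)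
    (hτ : ∃ k : ℤ, (Fintype.card V : ℝ) * τ = 2 * Real.pi * k)
    (α β : ℂ)
    (h : transition X τ *ᵥ Pi.single u 1 =
      α • (Pi.single u 1 : V → ℂ) + β • (Pi.single v 1 : V → ℂ)) :
    transition Xᶜ τ = NormedSpace.exp ((-(Complex.I * (τ : ℂ))) • lapC X) ∧
    transition Xᶜ τ *ᵥ Pi.single u 1 =
      (starRingEnd ℂ) α • (Pi.single u 1 : V → ℂ) +
        (starRingEnd ℂ) β • (Pi.single v 1 : V → ℂ) := by
  have : Nonempty V := ⟨u⟩
  rw [transition_compl_eq_transition_neg X τ hτ, transition_neg_mulVec_single, h]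
  refine ⟨by rw [transition, Complex.ofReal_neg, mul_neg], ?_⟩
  simp [star_add, star_smul, Pi.star_single]

/-- If `nτ ∈ 2πℤ` then the transition matrix of the complement
at time `τ` equals `exp(-iτ L(X))`, and fractional revival is transferred to the
complement with conjugated coefficients. -/
theorem complement_transition {V : Type*} [Fintype V] [DecidableEq V]
    (X : SimpleGraph V) (u v : V) (huv : u ≠ v) (τ : ℝ)
    (hτ : ∃ k : ℤ, (Fintype.card V : ℝ) * τ = 2 * Real.pi * k)
    (α β : ℂ)
    (h : transition X τ *ᵥ Pi.single u 1 =
      α • (Pi.single u 1 : V → ℂ) + β • (Pi.single v 1 : V → ℂ)) :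
    transition Xᶜ τ = NormedSpace.exp ((-(Complex.I * (τ : ℂ))) • lapC X) ∧
    transition Xᶜ τ *ᵥ Pi.single u 1 =
      (starRingEnd ℂ) α • (Pi.single u 1 : V → ℂ) +
        (starRingEnd ℂ) β • (Pi.single v 1 : V → ℂ) :=
  complement_transition_general X u v τ hτ α β h
end

section
/- Let X be a connected finite simple graph on n vertices and let a, b be Laplacian strongly cospectral vertices such that Φ⁻ is nonempty and Φ⁺ contains a nonzero element. Let θ⁺ and θ⁻ be the largest elements of Φ⁺ and Φ⁻ respectively, and let λ⁺ and λ⁻ be the smallest nonzero elements of Φ⁺ and Φ⁻ respectively, and write d = deg(a). (i) If a and b are not adjacent, then max{((n−2)/n)λ⁺, λ⁻} ≤ d ≤ min{((n−2)/n)θ⁺, θ⁻}. (ii) If a and b are adjacent, then max{((n−2)/n)λ⁺ + 1, λ⁻ − 1} ≤ d ≤ min{((n−2)/n)θ⁺ + 1, θ⁻ − 1}. -/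
open Matrix

/-! Strong cospectrality gives `(F_μ)_{ab} = ± (F_μ)_{aa}`, with the sign of `Φ^±`. Reading the
spectral decomposition `∑ μ, F_μ = I`, `∑ μ, μ F_μ = L` at the entries `(a, a)` and `(a, b)` then
shows that the nonnegative weights `(F_μ)_{aa}` have mass `1/2` on each of `Φ⁺` and `Φ⁻`, with first
moments `(d + L_{ab})/2` on `Φ⁺` and `(d - L_{ab})/2` on `Φ⁻`. For a connected graph `F_0 = J/n`,
so `0 ∈ Φ⁺` carries weight `1/n` and the nonzero part of `Φ⁺` has mass `1/2 - 1/n`. Squeezing each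
first moment between the extreme eigenvalues times the mass gives the bounds, with
`L_{ab} ∈ {0, -1}`. -/

open Module.End Finset
open scoped RealInnerProductSpace

namespace Finset

variable {ι : Type*} {s : Finset ι}

lemma sum_eq_sum_filter_add_sum_filter {M : Type*} [AddCommMonoid M] {p q : ι → Prop}
    [DecidablePred p] [DecidablePred q] {f : ι → M} (hpq : ∀ i ∈ s, p i → ¬ q i)
    (hf : ∀ i ∈ s, ¬ p i → ¬ q i → f i = 0) :
    ∑ i ∈ s, f i = ∑ i ∈ s with p i, f i + ∑ i ∈ s with q i, f i := by
  have hq : s.filter q = (s.filter (¬ p ·)).filter q := by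
    rw [filter_filter]
    exact filter_congr fun i hi => ⟨fun hq => ⟨fun hp => hpq i hi hp hq, hq⟩, And.right⟩
  have hrest : ∑ i ∈ (s.filter (¬ p ·)).filter (¬ q ·), f i = 0 :=
    sum_eq_zero fun i hi => by
      simp only [mem_filter] at hi
      exact hf i hi.1.1 hi.1.2 hi.2
  rw [hq, ← sum_filter_add_sum_filter_not s p, ← sum_filter_add_sum_filter_not (s.filter (¬ p ·)) q,
    hrest, add_zero]

variable {x w : ι → ℝ} (hw : ∀ i ∈ s, 0 ≤ w i)
include hw

lemma mul_sum_le_sum_mul {l : ℝ} (hl : ∀ i ∈ s, l ≤ x i) :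
    l * ∑ i ∈ s, w i ≤ ∑ i ∈ s, x i * w i := by
  rw [mul_sum]
  exact sum_le_sum fun i hi => mul_le_mul_of_nonneg_right (hl i hi) (hw i hi)

lemma sum_mul_le_mul_sum {u : ℝ} (hu : ∀ i ∈ s, x i ≤ u) :
    ∑ i ∈ s, x i * w i ≤ u * ∑ i ∈ s, w i := by
  rw [mul_sum]
  exact sum_le_sum fun i hi => mul_le_mul_of_nonneg_right (hu i hi) (hw i hi)

end Finset

namespace LinearMap.IsSymmetric

variable {E : Type*} [NormedAddCommGroup E] [InnerProductSpace ℝ E] [FiniteDimensional ℝ E]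
  {T : E →ₗ[ℝ] E} (hT : T.IsSymmetric) {n : ℕ} (hn : Module.finrank ℝ E = n)

lemma inner_eigenvectorBasis_starProjection_eigenspace (i : Fin n) (μ : ℝ) (x : E) :
    ⟪hT.eigenvectorBasis hn i, (eigenspace T μ).starProjection x⟫ =
      if hT.eigenvalues hn i = μ then ⟪hT.eigenvectorBasis hn i, x⟫ else 0 := by
  have hmem := (hT.hasEigenvector_eigenvectorBasis hn i).1
  split_ifs with h
  · rw [← Submodule.inner_starProjection_left_eq_right,
      Submodule.starProjection_eq_self_iff.mpr (h ▸ hmem)]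
  · exact hT.orthogonalFamily_eigenspaces h ⟨_, hmem⟩ ⟨_, Submodule.starProjection_apply_mem _ x⟩

lemma inner_starProjection_eigenspace_eq_sum (μ : ℝ) (x y : E) :
    ⟪x, (eigenspace T μ).starProjection y⟫ =
      ∑ i with hT.eigenvalues hn i = μ,
        ⟪x, hT.eigenvectorBasis hn i⟫ * ⟪hT.eigenvectorBasis hn i, y⟫ := by
  rw [← (hT.eigenvectorBasis hn).sum_inner_mul_inner x, sum_filter]
  simp_rw [inner_eigenvectorBasis_starProjection_eigenspace, mul_ite, mul_zero]

lemma starProjection_eigenspace_eq_zero {μ : ℝ} (hμ : μ ∉ univ.image (hT.eigenvalues hn)) :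
    (eigenspace T μ).starProjection = 0 := by
  ext y
  refine ext_inner_left ℝ fun x => ?_
  rw [inner_starProjection_eigenspace_eq_sum hT hn, sum_eq_zero]
  · simp
  · intro i hi
    exact absurd (mem_image_of_mem _ (mem_univ i)) ((mem_filter.mp hi).2 ▸ hμ)

lemma sum_mul_inner_starProjection_eigenspace (f : ℝ → ℝ) (x y : E) :
    ∑ μ ∈ univ.image (hT.eigenvalues hn), f μ * ⟪x, (eigenspace T μ).starProjection y⟫ =
      ∑ i, f (hT.eigenvalues hn i) *
        (⟪x, hT.eigenvectorBasis hn i⟫ * ⟪hT.eigenvectorBasis hn i, y⟫) := by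
  simp_rw [inner_starProjection_eigenspace_eq_sum hT hn, mul_sum]
  rw [← sum_fiberwise_of_maps_to (fun i _ => mem_image_of_mem (hT.eigenvalues hn) (mem_univ i))]
  refine sum_congr rfl fun μ _ => sum_congr rfl fun i hi => ?_
  rw [(mem_filter.mp hi).2]

lemma sum_inner_starProjection_eigenspace (x y : E) :
    ∑ μ ∈ univ.image (hT.eigenvalues hn), ⟪x, (eigenspace T μ).starProjection y⟫ =
      ⟪x, y⟫ := by
  have h := sum_mul_inner_starProjection_eigenspace hT hn (fun _ => 1) x y
  simp only [one_mul] at h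
  rw [h, OrthonormalBasis.sum_inner_mul_inner]

lemma sum_eigenvalue_mul_inner_starProjection_eigenspace (x y : E) :
    ∑ μ ∈ univ.image (hT.eigenvalues hn), μ * ⟪x, (eigenspace T μ).starProjection y⟫ =
      ⟪x, T y⟫ := by
  rw [sum_mul_inner_starProjection_eigenspace hT hn (fun μ => μ),
    ← (hT.eigenvectorBasis hn).sum_inner_mul_inner x (T y)]
  refine sum_congr rfl fun i _ => ?_
  rw [← hT, apply_eigenvectorBasis, RCLike.ofReal_real_eq_id, id_eq, real_inner_smul_left]
  ring

end LinearMap.IsSymmetric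

section Laplacian

variable {V : Type*} [Fintype V] [DecidableEq V] (G : SimpleGraph V)

lemma isSymmetric_toEuclideanLin_lapR : (toEuclideanLin (lapR G)).IsSymmetric :=
  isSymmetric_toEuclideanLin_iff.mpr (by classical exact G.isHermitian_lapMatrix ℝ)

noncomputable abbrev lapEigenspace (μ : ℝ) : Submodule ℝ (EuclideanSpace ℝ V) :=
  eigenspace (toEuclideanLin (lapR G)) μ

noncomputable def lapSpectrum : Finset ℝ :=
  univ.image ((isSymmetric_toEuclideanLin_lapR G).eigenvalues finrank_euclideanSpace)

lemma eigProj_apply (μ : ℝ) (u v : V) :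
    eigProj G μ u v = ⟪EuclideanSpace.single u 1,
      (lapEigenspace G μ).starProjection (EuclideanSpace.single v 1)⟫ := by
  have h : toEuclideanLin (eigProj G μ) = (lapEigenspace G μ).starProjection :=
    toEuclideanLin.apply_symm_apply _
  rw [EuclideanSpace.inner_single_left, ← ContinuousLinearMap.coe_coe, ← h, toLpLin_apply]
  simp

lemma eigProj_apply_comm (μ : ℝ) (u v : V) : eigProj G μ u v = eigProj G μ v u := by
  rw [eigProj_apply, eigProj_apply, ← Submodule.inner_starProjection_left_eq_right,
    real_inner_comm]

lemma eigProj_apply_self_nonneg (μ : ℝ) (u : V) : 0 ≤ eigProj G μ u u := by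
  rw [eigProj_apply, ← Submodule.inner_starProjection_left_eq_right]
  simpa using (lapEigenspace G μ).re_inner_starProjection_nonneg (EuclideanSpace.single u 1)

lemma eigProj_eq_zero_of_notMem {μ : ℝ} (hμ : μ ∉ lapSpectrum G) : eigProj G μ = 0 := by
  ext u v
  rw [eigProj_apply, (isSymmetric_toEuclideanLin_lapR G).starProjection_eigenspace_eq_zero _ hμ]
  simp

lemma sum_eigProj_apply (u v : V) :
    ∑ μ ∈ lapSpectrum G, eigProj G μ u v = (1 : Matrix V V ℝ) u v := by
  simp_rw [eigProj_apply]
  rw [lapSpectrum, (isSymmetric_toEuclideanLin_lapR G).sum_inner_starProjection_eigenspace,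
    EuclideanSpace.inner_single_left]
  simp [Matrix.one_apply]

lemma sum_mul_eigProj_apply (u v : V) :
    ∑ μ ∈ lapSpectrum G, μ * eigProj G μ u v = lapR G u v := by
  simp_rw [eigProj_apply]
  rw [lapSpectrum,
    (isSymmetric_toEuclideanLin_lapR G).sum_eigenvalue_mul_inner_starProjection_eigenspace,
    EuclideanSpace.inner_single_left, toLpLin_apply]
  simp

lemma lapEigenspace_zero (hconn : G.Connected) :
    lapEigenspace G 0 = ℝ ∙ WithLp.toLp 2 (fun _ : V => (1 : ℝ)) := by
  classical
  ext w
  rw [mem_eigenspace_iff, zero_smul, Submodule.mem_span_singleton, toLpLin_apply,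
    WithLp.toLp_eq_zero, lapR, G.lapMatrix_mulVec_eq_zero_iff_forall_reachable]
  constructor
  · intro hw
    obtain ⟨u⟩ := hconn.nonempty
    exact ⟨w u, by ext v; simpa using hw u v (hconn.preconnected u v)⟩
  · rintro ⟨c, rfl⟩ u v _
    simp

lemma eigProj_zero_apply (hconn : G.Connected) (u v : V) :
    eigProj G 0 u v = 1 / Fintype.card V := by
  rw [eigProj_apply, lapEigenspace_zero G hconn, Submodule.starProjection_singleton]
  simp [EuclideanSpace.norm_eq, EuclideanSpace.inner_single_left,
    EuclideanSpace.inner_single_right]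

lemma mem_lapSpectrum_of_mulVec_ne_zero {μ : ℝ} {x : V → ℝ} (h : eigProj G μ *ᵥ x ≠ 0) :
    μ ∈ lapSpectrum G := by
  by_contra hμ
  simp [eigProj_eq_zero_of_notMem G hμ] at h

lemma lapR_apply_self (u : V) : lapR G u u = (G.neighborSet u).ncard := by
  classical
  simp [lapR, SimpleGraph.lapMatrix, SimpleGraph.degMatrix, Set.ncard_eq_toFinset_card',
    ← SimpleGraph.card_neighborSet_eq_degree]

lemma lapR_apply_of_adj {u v : V} (h : G.Adj u v) : lapR G u v = -1 := by
  classical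
  simp [lapR, SimpleGraph.lapMatrix, SimpleGraph.degMatrix, h.ne, h]

lemma lapR_apply_of_not_adj {u v : V} (huv : u ≠ v) (h : ¬ G.Adj u v) : lapR G u v = 0 := by
  classical
  simp [lapR, SimpleGraph.lapMatrix, SimpleGraph.degMatrix, huv, h]

end Laplacian

section PhiSets

variable {V : Type*} [Fintype V] [DecidableEq V] {G : SimpleGraph V} {a b : V} {μ : ℝ}

lemma eigProj_apply_eq_of_mem_phiPlus (hμ : μ ∈ PhiPlus G a b) :
    eigProj G μ a b = eigProj G μ a a := by
  simpa [mulVec_single_one] using (congrFun hμ.1 a).symm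

lemma eigProj_apply_eq_neg_of_mem_phiMinus (hμ : μ ∈ PhiMinus G a b) :
    eigProj G μ a b = -eigProj G μ a a := by
  simpa [mulVec_single_one, neg_eq_iff_eq_neg] using (congrFun hμ.1 a).symm

lemma notMem_phiMinus_of_mem_phiPlus (hμ : μ ∈ PhiPlus G a b) : μ ∉ PhiMinus G a b :=
  fun hμ' => hμ.2 (self_eq_neg.mp (hμ'.1.trans (congrArg Neg.neg hμ.1.symm)))

lemma ne_of_mem_phiMinus (hμ : μ ∈ PhiMinus G a b) : a ≠ b := by
  rintro rfl
  exact hμ.2 (self_eq_neg.mp hμ.1)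

lemma zero_mem_phiPlus (hconn : G.Connected) : 0 ∈ PhiPlus G a b := by
  have hcol (v : V) : eigProj G 0 *ᵥ Pi.single v 1 = fun _ => 1 / (Fintype.card V : ℝ) := by
    ext u
    simp [eigProj_zero_apply G hconn]
  have : Nonempty V := hconn.nonempty
  refine ⟨by rw [hcol, hcol], ?_⟩
  rw [hcol]
  intro h
  simpa using congrFun h a

namespace StronglyCospectral

open scoped Classical

variable (hsc : StronglyCospectral G a b)
include hsc

lemma eigProj_apply_eq_zero (hplus : μ ∉ PhiPlus G a b) (hminus : μ ∉ PhiMinus G a b) :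
    eigProj G μ a a = 0 ∧ eigProj G μ a b = 0 := by
  have hcol : eigProj G μ *ᵥ Pi.single a 1 = 0 := by
    by_contra hne
    rcases hsc μ with h | h
    exacts [hplus ⟨h, hne⟩, hminus ⟨h, hne⟩]
  have hentry (u : V) : eigProj G μ u a = 0 := by
    simpa [mulVec_single_one] using congrFun hcol u
  exact ⟨hentry a, (eigProj_apply_comm G μ a b).trans (hentry b)⟩

lemma two_mul_sum_phiPlus (f : ℝ → ℝ) :
    2 * ∑ μ ∈ lapSpectrum G with μ ∈ PhiPlus G a b, f μ * eigProj G μ a a =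
      ∑ μ ∈ lapSpectrum G, f μ * (eigProj G μ a a + eigProj G μ a b) := calc
  _ = ∑ μ ∈ lapSpectrum G with μ ∈ PhiPlus G a b, f μ * (eigProj G μ a a + eigProj G μ a b) +
        ∑ μ ∈ lapSpectrum G with μ ∈ PhiMinus G a b,
          f μ * (eigProj G μ a a + eigProj G μ a b) := by
    rw [sum_eq_zero (s := filter (· ∈ PhiMinus G a b) (lapSpectrum G)) fun μ hμ => by
        rw [eigProj_apply_eq_neg_of_mem_phiMinus (mem_filter.mp hμ).2, add_neg_cancel, mul_zero],
      add_zero, mul_sum]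
    refine sum_congr rfl fun μ hμ => ?_
    rw [eigProj_apply_eq_of_mem_phiPlus (mem_filter.mp hμ).2]
    ring
  _ = _ := (sum_eq_sum_filter_add_sum_filter (fun _ _ => notMem_phiMinus_of_mem_phiPlus)
      fun μ _ hplus hminus => by simp [hsc.eigProj_apply_eq_zero hplus hminus]).symm

lemma two_mul_sum_phiPlus_mul_eigProj :
    2 * ∑ μ ∈ lapSpectrum G with μ ∈ PhiPlus G a b, μ * eigProj G μ a a =
      lapR G a a + lapR G a b := by
  simpa [mul_add, sum_add_distrib, sum_mul_eigProj_apply] using hsc.two_mul_sum_phiPlus id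

lemma two_mul_sum_phiMinus (f : ℝ → ℝ) :
    2 * ∑ μ ∈ lapSpectrum G with μ ∈ PhiMinus G a b, f μ * eigProj G μ a a =
      ∑ μ ∈ lapSpectrum G, f μ * (eigProj G μ a a - eigProj G μ a b) := calc
  _ = ∑ μ ∈ lapSpectrum G with μ ∈ PhiPlus G a b, f μ * (eigProj G μ a a - eigProj G μ a b) +
        ∑ μ ∈ lapSpectrum G with μ ∈ PhiMinus G a b,
          f μ * (eigProj G μ a a - eigProj G μ a b) := by
    rw [sum_eq_zero (s := filter (· ∈ PhiPlus G a b) (lapSpectrum G)) fun μ hμ => by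
        rw [eigProj_apply_eq_of_mem_phiPlus (mem_filter.mp hμ).2, sub_self, mul_zero],
      zero_add, mul_sum]
    refine sum_congr rfl fun μ hμ => ?_
    rw [eigProj_apply_eq_neg_of_mem_phiMinus (mem_filter.mp hμ).2]
    ring
  _ = _ := (sum_eq_sum_filter_add_sum_filter (fun _ _ => notMem_phiMinus_of_mem_phiPlus)
      fun μ _ hplus hminus => by simp [hsc.eigProj_apply_eq_zero hplus hminus]).symm

lemma two_mul_sum_phiMinus_mul_eigProj :
    2 * ∑ μ ∈ lapSpectrum G with μ ∈ PhiMinus G a b, μ * eigProj G μ a a =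
      lapR G a a - lapR G a b := by
  simpa [mul_sub, sum_sub_distrib, sum_mul_eigProj_apply] using hsc.two_mul_sum_phiMinus id

variable (hab : a ≠ b)
include hab

lemma two_mul_sum_phiPlus_eigProj :
    2 * ∑ μ ∈ lapSpectrum G with μ ∈ PhiPlus G a b, eigProj G μ a a = 1 := by
  simpa [sum_add_distrib, sum_eigProj_apply, one_apply_ne hab] using
    hsc.two_mul_sum_phiPlus (fun _ => 1)

lemma two_mul_sum_phiMinus_eigProj :
    2 * ∑ μ ∈ lapSpectrum G with μ ∈ PhiMinus G a b, eigProj G μ a a = 1 := by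
  simpa [sum_sub_distrib, sum_eigProj_apply, one_apply_ne hab] using
    hsc.two_mul_sum_phiMinus (fun _ => 1)

lemma phiMinus_bounds (hconn : G.Connected) {θ l : ℝ} (hθ : IsGreatest (PhiMinus G a b) θ)
    (hl : IsLeast (PhiMinus G a b ∩ {μ | μ ≠ 0}) l) :
    l ≤ lapR G a a - lapR G a b ∧ lapR G a a - lapR G a b ≤ θ := by
  have hmass := hsc.two_mul_sum_phiMinus_eigProj hab
  have hmoment := hsc.two_mul_sum_phiMinus_mul_eigProj
  set S := (lapSpectrum G).filter (· ∈ PhiMinus G a b)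
  have hmem (μ : ℝ) (hμ : μ ∈ S) : μ ∈ PhiMinus G a b ∩ {μ | μ ≠ 0} := by
    refine ⟨(mem_filter.mp hμ).2, ?_⟩
    rintro rfl
    exact notMem_phiMinus_of_mem_phiPlus (zero_mem_phiPlus hconn) (mem_filter.mp hμ).2
  have hw (μ : ℝ) (_ : μ ∈ S) : 0 ≤ eigProj G μ a a := eigProj_apply_self_nonneg G μ a
  have hlow := mul_sum_le_sum_mul (x := fun μ => μ) hw fun μ hμ => hl.2 (hmem μ hμ)
  have hup := sum_mul_le_mul_sum (x := fun μ => μ) hw fun μ hμ => hθ.2 (hmem μ hμ).1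
  rw [eq_one_div_of_mul_eq_one_right hmass] at hlow hup
  constructor <;> linarith

lemma phiPlus_bounds (hconn : G.Connected) {θ l : ℝ} (hθ : IsGreatest (PhiPlus G a b) θ)
    (hl : IsLeast (PhiPlus G a b ∩ {μ | μ ≠ 0}) l) :
    ((Fintype.card V : ℝ) - 2) / Fintype.card V * l ≤ lapR G a a + lapR G a b ∧
      lapR G a a + lapR G a b ≤ ((Fintype.card V : ℝ) - 2) / Fintype.card V * θ := by
  have hmass := hsc.two_mul_sum_phiPlus_eigProj hab
  have hmoment := hsc.two_mul_sum_phiPlus_mul_eigProj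
  have hzero : 0 ∈ PhiPlus G a b := zero_mem_phiPlus hconn
  have h0 : 0 ∈ (lapSpectrum G).filter (· ∈ PhiPlus G a b) :=
    mem_filter.mpr ⟨mem_lapSpectrum_of_mulVec_ne_zero G hzero.2, hzero⟩
  rw [← add_sum_erase _ _ h0, eigProj_zero_apply G hconn] at hmass
  rw [← add_sum_erase _ _ h0, zero_mul, zero_add] at hmoment
  set S := ((lapSpectrum G).filter (· ∈ PhiPlus G a b)).erase 0
  have hmem (μ : ℝ) (hμ : μ ∈ S) : μ ∈ PhiPlus G a b ∩ {μ | μ ≠ 0} :=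
    ⟨(mem_filter.mp (mem_of_mem_erase hμ)).2, ne_of_mem_erase hμ⟩
  have hw (μ : ℝ) (_ : μ ∈ S) : 0 ≤ eigProj G μ a a := eigProj_apply_self_nonneg G μ a
  have hlow := mul_sum_le_sum_mul (x := fun μ => μ) hw fun μ hμ => hl.2 (hmem μ hμ)
  have hup := sum_mul_le_mul_sum (x := fun μ => μ) hw fun μ hμ => hθ.2 (hmem μ hμ).1
  have hcard : (Fintype.card V : ℝ) ≠ 0 := by
    have := hconn.nonempty
    positivity
  have hS : ∑ μ ∈ S, eigProj G μ a a = ((Fintype.card V : ℝ) - 2) / Fintype.card V / 2 := by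
    field_simp at hmass ⊢
    linarith
  rw [hS] at hlow hup
  constructor <;> linarith

end StronglyCospectral

end PhiSets

/-- Degree bounds for Laplacian strongly cospectral vertices in
terms of the extreme elements of `Φ⁺` and `Φ⁻`. -/
theorem degree_bounds {V : Type*} [Fintype V] [DecidableEq V]
    (X : SimpleGraph V) (hconn : X.Connected) (a b : V)
    (hsc : StronglyCospectral X a b)
    (θp θm lp lm : ℝ)
    (hθp : IsGreatest (PhiPlus X a b) θp)
    (hθm : IsGreatest (PhiMinus X a b) θm)
    (hlp : IsLeast (PhiPlus X a b ∩ {μ | μ ≠ 0}) lp)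
    (hlm : IsLeast (PhiMinus X a b ∩ {μ | μ ≠ 0}) lm) :
    (¬ X.Adj a b →
      max (((Fintype.card V : ℝ) - 2) / (Fintype.card V : ℝ) * lp) lm ≤
          ((X.neighborSet a).ncard : ℝ) ∧
      ((X.neighborSet a).ncard : ℝ) ≤
        min (((Fintype.card V : ℝ) - 2) / (Fintype.card V : ℝ) * θp) θm) ∧
    (X.Adj a b →
      max (((Fintype.card V : ℝ) - 2) / (Fintype.card V : ℝ) * lp + 1) (lm - 1) ≤
          ((X.neighborSet a).ncard : ℝ) ∧
      ((X.neighborSet a).ncard : ℝ) ≤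
        min (((Fintype.card V : ℝ) - 2) / (Fintype.card V : ℝ) * θp + 1) (θm - 1)) := by
  have hab := ne_of_mem_phiMinus hθm.1
  obtain ⟨hlp', hθp'⟩ := hsc.phiPlus_bounds hab hconn hθp hlp
  obtain ⟨hlm', hθm'⟩ := hsc.phiMinus_bounds hab hconn hθm hlm
  rw [lapR_apply_self] at hlp' hθp' hlm' hθm'
  refine ⟨fun hadj => ?_, fun hadj => ?_⟩
  · rw [lapR_apply_of_not_adj X hab hadj] at hlp' hθp' hlm' hθm'
    exact ⟨max_le (by linarith) (by linarith), le_min (by linarith) (by linarith)⟩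
  · rw [lapR_apply_of_adj X hadj] at hlp' hθp' hlm' hθm'
    exact ⟨max_le (by linarith) (by linarith), le_min (by linarith) (by linarith)⟩
end

section
/- Let X be a finite simple graph. If X admits proper Laplacian fractional revival between distinct vertices a and b at some time τ, then a and b are Laplacian strongly cospectral, i.e., for every μ ∈ ℝ, F_μ e_a = F_μ e_b or F_μ e_a = −F_μ e_b. -/
open Matrix

/-!
The transition matrix `U = exp(iτL)` is unitary, and `1ᵀ U = 1ᵀ` because `L` has zero column
sums; so the revival coefficients satisfy `α + β = 1` and `|α|² + |β|² = 1`. As `F_μ L = μ F_μ`,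
also `F_μ U = e^{iτμ} F_μ`, and applying `F_μ` to `U e_a = α e_a + β e_b` gives
`e^{iτμ} x = α x + β y` for the real vectors `x = F_μ e_a`, `y = F_μ e_b`. Thus either `x = y = 0`,
or `y = c x` for a real `c` with `e^{iτμ} = α + β c`, and the two constraints force `c = ±1`.
-/

open NormedSpace

namespace Matrix
variable {m 𝕂 : Type*} [Fintype m] [DecidableEq m] [RCLike 𝕂]

theorem mul_exp_of_mul_eq_smul {F B : Matrix m m 𝕂} {s : 𝕂} (h : F * B = s • F) :
    F * exp B = exp s • F := by
  have hF : SemiconjBy F B (algebraMap 𝕂 _ s) := by rw [SemiconjBy, ← Algebra.smul_def, h]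
  have hexp : SemiconjBy F (exp B) (exp (algebraMap 𝕂 _ s)) :=
    open scoped Matrix.Norms.Operator in hF.exp_right
  have hs : exp (algebraMap 𝕂 (Matrix m m 𝕂) s) = algebraMap 𝕂 _ (exp s) :=
    open scoped Matrix.Norms.Operator in (algebraMap_exp_comm (𝔸 := Matrix m m 𝕂) s).symm
  rw [hexp.eq, hs, ← Algebra.smul_def]

theorem exp_mem_unitary_of_mem_skewAdjoint {A : Matrix m m 𝕂} (h : A ∈ skewAdjoint _) :
    exp A ∈ unitary (Matrix m m 𝕂) := by
  rw [Unitary.mem_iff, star_eq_conjTranspose, ← exp_conjTranspose, ← star_eq_conjTranspose,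
    skewAdjoint.mem_iff.mp h, ← exp_add_of_commute _ _ (Commute.refl A).neg_left,
    ← exp_add_of_commute _ _ (Commute.refl A).neg_right, neg_add_cancel, add_neg_cancel,
    NormedSpace.exp_zero, and_self]

end Matrix

theorem Complex.eq_one_or_eq_neg_one_of_normSq_add_mul {α β : ℂ} {c : ℝ} (hsum : α + β = 1)
    (hnorm : normSq α + normSq β = 1) (hβ : β ≠ 0) (hc : normSq (α + β * c) = 1) :
    c = 1 ∨ c = -1 := by
  -- With `α = 1 - β`, the constraint on `α` says `Re β = |β|²`, and then the one on
  -- `α + β c = 1 + (c - 1) β` reduces to `(c² - 1) |β|² = 0`.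
  obtain rfl : α = 1 - β := eq_sub_of_add_eq hsum
  have hβ' : β.re * β.re + β.im * β.im ≠ 0 := by
    rw [← normSq_apply]
    exact (normSq_pos.mpr hβ).ne'
  simp only [normSq_apply, sub_re, sub_im, add_re, add_im, mul_re, mul_im, one_re, one_im,
    ofReal_re, ofReal_im] at hnorm hc
  have h : (c - 1) * (c + 1) * (β.re * β.re + β.im * β.im) = 0 := by
    linear_combination hc + (c - 1) * hnorm
  rcases mul_eq_zero.mp ((mul_eq_zero.mp h).resolve_right hβ') with h | h
  · exact .inl (by linarith)
  · exact .inr (by linarith)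

theorem eq_or_eq_neg_of_forall_mul_eq {ι : Type*} {x y : ι → ℝ} {α β γ : ℂ} (hsum : α + β = 1)
    (hnorm : Complex.normSq α + Complex.normSq β = 1) (hβ : β ≠ 0) (hγ : Complex.normSq γ = 1)
    (h : ∀ i, γ * x i = α * x i + β * y i) : x = y ∨ x = -y := by
  by_cases hx : x = 0
  · left
    subst hx
    funext i
    simpa [hβ, eq_comm] using h i
  obtain ⟨v, hv⟩ := Function.ne_iff.mp hx
  set c : ℝ := y v / x v
  have hxv : (x v : ℂ) ≠ 0 := by exact_mod_cast hv
  have hγc : γ = α + β * c := by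
    have hyv : (y v : ℂ) = c * x v := by
      push_cast [c]
      field_simp
    apply mul_right_cancel₀ hxv
    rw [h v, hyv]
    ring
  have hy : ∀ i, y i = c * x i := fun i => by
    have hi := h i
    rw [hγc] at hi
    apply Complex.ofReal_injective
    apply mul_left_cancel₀ hβ
    push_cast
    linear_combination -hi
  rcases Complex.eq_one_or_eq_neg_one_of_normSq_add_mul hsum hnorm hβ (hγc ▸ hγ) with hc | hc
  · left; funext i; simp [hy, hc]
  · right; funext i; simp [hy, hc]

section Revival

variable {n : Type*} [Fintype n] [DecidableEq n] {a b : n}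

theorem mul_mulVec_single_of_mulVec_single_eq {R : Type*} [CommSemiring R] {U : Matrix n n R}
    {α β : R} (hU : U *ᵥ Pi.single a 1 = α • (Pi.single a 1 : n → R) + β • Pi.single b 1)
    (M : Matrix n n R) :
    (M * U) *ᵥ Pi.single a 1 = α • M *ᵥ Pi.single a 1 + β • M *ᵥ Pi.single b 1 := by
  rw [← mulVec_mulVec, hU, mulVec_add, mulVec_smul, mulVec_smul]

theorem normSq_add_normSq_of_mulVec_single_eq {U : Matrix n n ℂ} {α β : ℂ} (hab : a ≠ b)
    (hUu : U ∈ unitary (Matrix n n ℂ))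
    (hU : U *ᵥ Pi.single a 1 = α • (Pi.single a 1 : n → ℂ) + β • Pi.single b 1) :
    Complex.normSq α + Complex.normSq β = 1 := by
  have h : (star U * U) a a = (1 : Matrix n n ℂ) a a := by rw [Unitary.star_mul_self_of_mem hUu]
  have hcol : ∀ k, U k a = α * (Pi.single a 1 : n → ℂ) k + β * (Pi.single b 1 : n → ℂ) k :=
    fun k => by simpa using congr_fun hU k
  simp only [star_eq_conjTranspose, mul_apply, conjTranspose_apply, hcol, one_apply_eq] at h
  have h' : ((Complex.normSq α + Complex.normSq β : ℝ) : ℂ) = 1 := by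
    simpa [Pi.single_apply, add_mul, mul_add, Finset.sum_add_distrib, hab, Ne.symm hab,
      Complex.normSq_eq_conj_mul_self] using h
  exact_mod_cast h'

end Revival

namespace SimpleGraph
variable {V : Type*} [Fintype V] [DecidableEq V] (G : SimpleGraph V)

theorem lapR_isSymm : (lapR G).IsSymm := by
  classical
  exact isSymm_lapMatrix ℝ G

theorem toEuclideanLin_eigProj (μ : ℝ) :
    toEuclideanLin (eigProj G μ) =
      (Module.End.eigenspace (toEuclideanLin (lapR G)) μ).starProjection.toLinearMap :=
  toEuclideanLin.apply_symm_apply _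

theorem eigProj_isSymm (μ : ℝ) : (eigProj G μ).IsSymm := by
  rw [← isHermitian_iff_isSymm, ← isSymmetric_toEuclideanLin_iff, toEuclideanLin_eigProj]
  exact Submodule.starProjection_isSymmetric _

theorem lapR_mul_eigProj (μ : ℝ) : lapR G * eigProj G μ = μ • eigProj G μ := by
  apply Matrix.toEuclideanLin.injective
  ext1 x
  have hx : toEuclideanLin (eigProj G μ) x ∈
      Module.End.eigenspace (toEuclideanLin (lapR G)) μ := by
    rw [toEuclideanLin_eigProj]
    exact Submodule.starProjection_apply_mem _ x
  rw [Module.End.mem_eigenspace_iff] at hx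
  ext i
  simpa [← mulVec_mulVec, smul_mulVec] using congr(WithLp.ofLp $hx i)

theorem eigProj_mul_lapR (μ : ℝ) : eigProj G μ * lapR G = μ • eigProj G μ := by
  simpa [(lapR_isSymm G).eq, (eigProj_isSymm G μ).eq] using
    congrArg transpose (lapR_mul_eigProj G μ)

theorem lapC_isHermitian : (lapC G).IsHermitian := by
  ext i j
  simpa [lapC] using congr_fun (congr_fun (lapR_isSymm G).eq i) j

theorem transition_mem_unitary (t : ℝ) : transition G t ∈ unitary (Matrix V V ℂ) := by
  refine Matrix.exp_mem_unitary_of_mem_skewAdjoint ?_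
  rw [skewAdjoint.mem_iff, star_smul, star_eq_conjTranspose, (lapC_isHermitian G).eq]
  simp

theorem lapR_mulVec_const_eq_zero : lapR G *ᵥ (fun _ => 1) = 0 := by
  classical
  exact G.lapMatrix_mulVec_const_eq_zero

theorem ones_mul_lapC : (of fun _ _ => (1 : ℂ)) * lapC G = 0 := by
  ext i j
  have h := congr_fun (lapR_mulVec_const_eq_zero G) j
  simp only [mulVec, dotProduct, mul_one, Pi.zero_apply] at h
  simp only [lapC, mul_apply, of_apply, map_apply, (lapR_isSymm G).apply j, one_mul,
    Matrix.zero_apply]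
  exact_mod_cast h

theorem ones_mul_transition (t : ℝ) :
    (of fun _ _ => (1 : ℂ)) * transition G t = of fun _ _ => 1 := by
  have h := Matrix.mul_exp_of_mul_eq_smul (s := 0)
    (by rw [Matrix.mul_smul, ones_mul_lapC, smul_zero, zero_smul] :
      (of fun _ _ => (1 : ℂ)) * ((Complex.I * t) • lapC G) = (0 : ℂ) • of fun _ _ => 1)
  rwa [NormedSpace.exp_zero, one_smul] at h

theorem eigProj_map_mul_lapC (μ : ℝ) :
    (eigProj G μ).map Complex.ofReal * lapC G = (μ : ℂ) • (eigProj G μ).map Complex.ofReal := by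
  ext i j
  have h := congr_fun (congr_fun (eigProj_mul_lapR G μ) i) j
  simp only [mul_apply, Matrix.smul_apply, smul_eq_mul] at h
  simp only [lapC, mul_apply, map_apply, Matrix.smul_apply, smul_eq_mul]
  exact_mod_cast h

theorem eigProj_map_mul_transition (μ t : ℝ) :
    (eigProj G μ).map Complex.ofReal * transition G t =
      Complex.exp (↑(t * μ) * Complex.I) • (eigProj G μ).map Complex.ofReal := by
  rw [Complex.exp_eq_exp_ℂ]
  refine Matrix.mul_exp_of_mul_eq_smul ?_
  rw [Matrix.mul_smul, eigProj_map_mul_lapC, smul_smul]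
  congr 1
  push_cast
  ring

theorem add_eq_one_of_transition_mulVec_single_eq {a b : V} {t : ℝ} {α β : ℂ}
    (hU : transition G t *ᵥ Pi.single a 1 = α • (Pi.single a 1 : V → ℂ) + β • Pi.single b 1) :
    α + β = 1 := by
  have h := congr_fun (mul_mulVec_single_of_mulVec_single_eq hU (of fun _ _ => 1)) a
  rw [ones_mul_transition] at h
  simpa [mulVec_single_one] using h.symm

end SimpleGraph

/-- Proper Laplacian fractional revival between `a` and `b`
implies that `a` and `b` are Laplacian strongly cospectral. -/
theorem properLaFR_stronglyCospectral {V : Type*} [Fintype V] [DecidableEq V]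
    (X : SimpleGraph V) (a b : V) (τ : ℝ) (h : properLaFR X a b τ) :
    StronglyCospectral X a b := by
  obtain ⟨hab, α, β, hβ, hU⟩ := h
  have hsum := X.add_eq_one_of_transition_mulVec_single_eq hU
  have hnorm := normSq_add_normSq_of_mulVec_single_eq hab (X.transition_mem_unitary τ) hU
  intro μ
  refine eq_or_eq_neg_of_forall_mul_eq (γ := Complex.exp (↑(τ * μ) * Complex.I)) hsum hnorm hβ
    (by rw [Complex.normSq_eq_norm_sq, Complex.norm_exp_ofReal_mul_I, one_pow]) fun i => ?_
  have h := congr_fun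
    (mul_mulVec_single_of_mulVec_single_eq hU ((eigProj X μ).map Complex.ofReal)) i
  rw [X.eigProj_map_mul_transition, smul_mulVec] at h
  simpa [mulVec_single_one] using h
end

section
/- Let X be a connected finite simple graph and let a be a vertex with eigenvalue support Φ_a with respect to the Laplacian matrix. Then |Φ_a| ≥ ecc(a) + 1, where ecc(a) is the eccentricity of a, i.e., the maximum graph distance from a to any other vertex. -/
open Matrix

/-!
For `0 ≤ k ≤ ecc(a)` the vectors `L ^ k e_a` are linearly independent: the entry of `L ^ k e_a`
at `u` vanishes when `k < d(a, u)` and has sign `(-1) ^ k` when `k = d(a, u)`, so evaluating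
them at the vertices of a geodesic from `a` gives a triangular matrix with nonzero diagonal.
On the other hand `e_a = ∑_{μ ∈ Φ_a} F_μ e_a`, so every `L ^ k e_a` lies in the `L`-invariant
span of the `|Φ_a|` eigenvectors `F_μ e_a`.
-/

namespace SimpleGraph

variable {V : Type*} {G : SimpleGraph V}

lemma Walk.dist_getVert_of_length_eq_dist {u v : V} (p : G.Walk u v)
    (hp : p.length = G.dist u v) {j : ℕ} (hj : j ≤ p.length) : G.dist u (p.getVert j) = j := by
  rw [← length_eq_dist_of_subwalk hp (p.isSubwalk_take j), Walk.take_length]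
  exact min_eq_left hj

lemma exists_adj_dist_eq_of_dist_eq_succ {u v : V} {k : ℕ} (h : G.dist u v = k + 1) :
    ∃ w, G.Adj w v ∧ G.dist u w = k := by
  obtain ⟨p, hp⟩ :=
    (Reachable.of_dist_ne_zero (h.trans_ne k.succ_ne_zero)).exists_walk_length_eq_dist
  refine ⟨p.getVert k, ?_, p.dist_getVert_of_length_eq_dist hp (by rw [hp, h]; omega)⟩
  simpa [← h, ← hp, p.getVert_length] using p.adj_getVert_succ (i := k) (by omega)

lemma dist_le_dist_add_one_of_adj {u v w : V} (h : G.Adj w v) : G.dist u v ≤ G.dist u w + 1 := by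
  simpa [dist_eq_one_iff_adj.mpr h] using h.reachable.dist_triangle_right u

variable [Fintype V] [DecidableEq V] [DecidableRel G.Adj] {R : Type*}

lemma lapMatrix_pow_mulVec_single_eq_zero_of_lt_dist [Ring R] {a u : V} {k : ℕ}
    (h : k < G.dist a u) :
    (G.lapMatrix R ^ k *ᵥ Pi.single a 1) u = 0 := by
  induction k generalizing u with
  | zero =>
    have : u ≠ a := by rintro rfl; simp at h
    simp [this]
  | succ k ih =>
    rw [pow_succ', ← mulVec_mulVec, lapMatrix_mulVec_apply, ih (by omega), mul_zero, zero_sub,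
      neg_eq_zero]
    refine Finset.sum_eq_zero fun w hw => ih ?_
    have := dist_le_dist_add_one_of_adj (u := a) ((G.mem_neighborFinset u w).mp hw).symm
    omega

lemma neg_one_pow_mul_lapMatrix_pow_mulVec_single_pos [Ring R] [PartialOrder R]
    [IsStrictOrderedRing R] {a u : V} (hr : G.Reachable a u) {k : ℕ} (h : G.dist a u = k) :
    0 < (-1) ^ k * (G.lapMatrix R ^ k *ᵥ Pi.single a 1) u := by
  induction k generalizing u with
  | zero =>
    obtain rfl := hr.dist_eq_zero_iff.mp h
    simp
  | succ k ih =>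
    obtain ⟨w₀, hw₀u, hw₀⟩ := exists_adj_dist_eq_of_dist_eq_succ h
    have hsum : (-1) ^ (k + 1) * (G.lapMatrix R ^ (k + 1) *ᵥ Pi.single a 1) u =
        ∑ w ∈ G.neighborFinset u, (-1) ^ k * (G.lapMatrix R ^ k *ᵥ Pi.single a 1) w := by
      rw [pow_succ' (G.lapMatrix R), ← mulVec_mulVec, lapMatrix_mulVec_apply,
        lapMatrix_pow_mulVec_single_eq_zero_of_lt_dist (by omega), mul_zero, zero_sub, pow_succ,
        mul_neg_one, neg_mul_neg, Finset.mul_sum]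
    rw [hsum]
    refine Finset.sum_pos' (fun w hw => ?_) ⟨w₀, (G.mem_neighborFinset u w₀).mpr hw₀u.symm,
      ih (hr.trans hw₀u.symm.reachable) hw₀⟩
    have hwu := ((G.mem_neighborFinset u w).mp hw).symm
    have := dist_le_dist_add_one_of_adj (u := a) hwu
    rcases (show k ≤ G.dist a w by omega).eq_or_lt with hk | hk
    · exact (ih (hr.trans hwu.symm.reachable) hk.symm).le
    · rw [lapMatrix_pow_mulVec_single_eq_zero_of_lt_dist hk, mul_zero]

end SimpleGraph

theorem linearIndependent_of_apply_eq_zero_of_lt {K ι m : Type*} [Field K] [Fintype m]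
    [DecidableEq m] [LinearOrder m] (v : m → ι → K) (u : m → ι)
    (hzero : ∀ k j, k < j → v k (u j) = 0) (hdiag : ∀ k, v k (u k) ≠ 0) :
    LinearIndependent K v := by
  have hdet : (Matrix.of fun k j => v k (u j)).det ≠ 0 := by
    rw [det_of_isLowerTriangular (Matrix.of fun k j => v k (u j)) fun k j h => hzero k j h]
    exact Finset.prod_ne_zero_iff.mpr fun k _ => hdiag k
  exact LinearIndependent.of_comp (LinearMap.funLeft K K u)
    (linearIndependent_rows_of_det_ne_zero hdet)

section Spectral

open Module End

lemma Module.End.apply_mem_span_of_forall_mem_eigenspace {R M : Type*} [CommRing R]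
    [AddCommGroup M] [Module R M] (f : End R M) {s : Set M}
    (hs : ∀ v ∈ s, ∃ μ, v ∈ f.eigenspace μ) {y : M} (hy : y ∈ Submodule.span R s) :
    f y ∈ Submodule.span R s := by
  suffices Submodule.span R s ≤ (Submodule.span R s).comap f from this hy
  refine Submodule.span_le.mpr fun v hv => ?_
  obtain ⟨μ, hμ⟩ := hs v hv
  simpa [mem_eigenspace_iff.mp hμ] using
    Submodule.smul_mem _ μ (Submodule.subset_span hv : v ∈ Submodule.span R s)

lemma Submodule.finrank_span_image_le_ncard {R M ι : Type*} [DivisionRing R] [AddCommGroup M]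
    [Module R M] (f : ι → M) {s : Set ι} (hs : s.Finite) :
    Module.finrank R (Submodule.span R (f '' s)) ≤ s.ncard := by
  classical
  obtain ⟨t, rfl⟩ := hs.exists_finset_coe
  rw [← Finset.coe_image, Set.ncard_coe_finset]
  exact (finrank_span_finset_le_card _).trans Finset.card_image_le

namespace LinearMap

variable {𝕜 E : Type*} [RCLike 𝕜] [NormedAddCommGroup E] [InnerProductSpace 𝕜 E]
  [FiniteDimensional 𝕜 E]

def eigenvalueSupport (T : E →ₗ[𝕜] E) (x : E) : Set 𝕜 :=
  {μ | (eigenspace T μ).starProjection x ≠ 0}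

lemma finite_eigenvalueSupport (T : E →ₗ[𝕜] E) (x : E) : (T.eigenvalueSupport x).Finite :=
  (finite_hasEigenvalue T).subset fun μ hμ hbot => hμ <|
    (Submodule.starProjection_apply_eq_zero_iff _).mpr (by simp [hbot])

namespace IsSymmetric

variable {T : E →ₗ[𝕜] E}

lemma mem_span_image_eigenvalueSupport (hT : T.IsSymmetric) (x : E) :
    x ∈ Submodule.span 𝕜
      ((fun μ => (eigenspace T μ).starProjection x) '' T.eigenvalueSupport x) := by
  have hx : x ∈ ⨆ μ : Eigenvalues T, eigenspace T μ := by
    rw [Submodule.orthogonal_eq_bot_iff.mp hT.orthogonalComplement_iSup_eigenspaces_eq_bot']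
    trivial
  have hsum : ∑ μ : Eigenvalues T, (eigenspace T μ).starProjection x ∈ Submodule.span 𝕜
      ((fun μ => (eigenspace T μ).starProjection x) '' T.eigenvalueSupport x) := by
    refine Submodule.sum_mem _ fun μ _ => ?_
    by_cases h : (eigenspace T μ).starProjection x = 0
    · rw [h]
      exact zero_mem _
    · exact Submodule.subset_span ⟨μ, h, rfl⟩
  rwa [hT.orthogonalFamily_eigenspaces'.sum_projection_of_mem_iSup x hx] at hsum

theorem card_le_ncard_eigenvalueSupport (hT : T.IsSymmetric) {n : ℕ} {x : E}
    (hx : LinearIndependent 𝕜 fun k : Fin n => (T ^ (k : ℕ)) x) :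
    n ≤ (T.eigenvalueSupport x).ncard := by
  set K := Submodule.span 𝕜 (Set.range fun k : Fin n => (T ^ (k : ℕ)) x)
  set W := Submodule.span 𝕜
    ((fun μ => (eigenspace T μ).starProjection x) '' T.eigenvalueSupport x)
  have hW : ∀ y ∈ W, T y ∈ W := fun y =>
    Module.End.apply_mem_span_of_forall_mem_eigenspace T <| by
      rintro _ ⟨μ, -, rfl⟩
      exact ⟨μ, (eigenspace T μ).starProjection_apply_mem x⟩
  have hKW : K ≤ W :=
    Submodule.span_le.mpr <| Set.range_subset_iff.mpr fun k =>
      pow_apply_mem_of_forall_mem k hW x (hT.mem_span_image_eigenvalueSupport x)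
  calc n = Module.finrank 𝕜 K := by rw [finrank_span_eq_card hx, Fintype.card_fin]
    _ ≤ Module.finrank 𝕜 W := Submodule.finrank_mono hKW
    _ ≤ (T.eigenvalueSupport x).ncard :=
        Submodule.finrank_span_image_le_ncard _ (T.finite_eigenvalueSupport x)

end IsSymmetric

end LinearMap

end Spectral

section Laplacian

open WithLp

lemma Matrix.toEuclideanLin_pow_toLp {𝕜 n : Type*} [RCLike 𝕜] [Fintype n] [DecidableEq n]
    (A : Matrix n n 𝕜) (k : ℕ) (v : n → 𝕜) :
    (toEuclideanLin A ^ k) (toLp 2 v) = toLp 2 (A ^ k *ᵥ v) := by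
  rw [← toLpLin_pow, toLpLin_toLp, toLin'_apply]

variable {V : Type*} [Fintype V] [DecidableEq V]

lemma lapR_eq_lapMatrix (G : SimpleGraph V) [DecidableRel G.Adj] : lapR G = G.lapMatrix ℝ := by
  unfold lapR
  congr

lemma eigProj_mulVec (G : SimpleGraph V) (μ : ℝ) (v : V → ℝ) :
    eigProj G μ *ᵥ v =
      ofLp ((Module.End.eigenspace (toEuclideanLin (lapR G)) μ).starProjection (toLp 2 v)) := by
  change ofLp (toEuclideanLin (eigProj G μ) (toLp 2 v)) = _
  rw [eigProj, LinearEquiv.apply_symm_apply]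
  rfl

lemma eigSupport_eq_eigenvalueSupport (G : SimpleGraph V) (a : V) :
    eigSupport G a = (toEuclideanLin (lapR G)).eigenvalueSupport (toLp 2 (Pi.single a 1)) := by
  ext μ
  simp only [eigSupport, LinearMap.eigenvalueSupport, eigProj_mulVec,
    ne_eq, ofLp_eq_zero]

end Laplacian

/-- The size of the eigenvalue support of a vertex is at
least its eccentricity plus one. -/
theorem eigSupport_ge_eccentricity {V : Type*} [Fintype V] [DecidableEq V]
    (X : SimpleGraph V) (hconn : X.Connected) (a : V) :
    Finset.univ.sup (fun u => X.dist a u) + 1 ≤ (eigSupport X a).ncard := by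
  classical
  obtain ⟨u, -, hu⟩ := Finset.univ.exists_mem_eq_sup ⟨a, Finset.mem_univ a⟩ (X.dist a)
  obtain ⟨p, hp⟩ := hconn.exists_walk_length_eq_dist a u
  set m := Finset.univ.sup (X.dist a)
  have hdist (j : Fin (m + 1)) : X.dist a (p.getVert j) = j :=
    p.dist_getVert_of_length_eq_dist hp (by omega)
  have hindep :
      LinearIndependent ℝ fun k : Fin (m + 1) => lapR X ^ (k : ℕ) *ᵥ Pi.single a 1 := by
    rw [lapR_eq_lapMatrix]
    refine linearIndependent_of_apply_eq_zero_of_lt _ (fun j => p.getVert j) (fun k j hkj => ?_)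
      (fun k => right_ne_zero_of_mul (SimpleGraph.neg_one_pow_mul_lapMatrix_pow_mulVec_single_pos
        (hconn a _) (hdist k)).ne')
    exact SimpleGraph.lapMatrix_pow_mulVec_single_eq_zero_of_lt_dist ((hdist j).symm ▸ hkj)
  have hT : (toEuclideanLin (lapR X)).IsSymmetric := by
    rw [isSymmetric_toEuclideanLin_iff, lapR_eq_lapMatrix]
    exact X.isHermitian_lapMatrix ℝ
  rw [eigSupport_eq_eigenvalueSupport]
  refine hT.card_le_ncard_eigenvalueSupport ?_
  simp only [toEuclideanLin_pow_toLp]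
  exact (hindep.map' _ (WithLp.linearEquiv 2 ℝ (V → ℝ)).symm.ker :)
end

section
/- Let T be a finite tree (a connected acyclic simple graph) with Laplacian matrix L. Let μ be an integer eigenvalue of L and let x be an eigenvector of L for μ all of whose entries are integers. Then for any two vertices u and v of T, μ divides x_u − x_v. -/
open Matrix

/-!
Let `ab` be an edge of the tree and `S` the vertex set of the component of `a` in `T - ab`.
Summing the eigenvalue equation `(L x)_u = μ x_u` over `u ∈ S`, the contributions of edges
inside `S` cancel and `ab` is the only edge leaving `S`, so `μ ∑_{u ∈ S} x_u = x_a - x_b`.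
Thus `μ` divides the difference of `x` along every edge, hence along every path.
-/

namespace SimpleGraph

section Cut

variable {V : Type*} [Fintype V] {G : SimpleGraph V}

theorem IsBridge.exists_finset_cut {a b : V} (hbr : G.IsBridge s(a, b)) :
    ∃ S : Finset V, a ∈ S ∧ b ∉ S ∧ ∀ u ∈ S, ∀ w ∉ S, G.Adj u w → u = a ∧ w = b := by
  classical
  refine ⟨({w | (G.deleteEdges {s(a, b)}).Reachable a w} : Finset V), by simp,
    by simpa using isBridge_iff.mp hbr, ?_⟩
  intro u hu w hw huw
  simp only [Finset.mem_filter, Finset.mem_univ, true_and] at hu hw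
  by_contra hne
  refine hw (hu.trans (Adj.reachable ((deleteEdges_adj ..).mpr ⟨huw, fun he => ?_⟩)))
  rcases Sym2.eq_iff.mp he with ⟨rfl, rfl⟩ | ⟨rfl, rfl⟩
  · exact hne ⟨rfl, rfl⟩
  · exact hbr hu

end Cut

variable {V : Type*} [Fintype V] [DecidableEq V] (G : SimpleGraph V) [DecidableRel G.Adj]

theorem lapMatrix_mulVec_apply_eq_sum_sub {R : Type*} [NonAssocRing R] (x : V → R) (v : V) :
    (G.lapMatrix R *ᵥ x) v = ∑ w ∈ G.neighborFinset v, (x v - x w) := by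
  rw [lapMatrix_mulVec_apply, Finset.sum_sub_distrib, Finset.sum_const,
    card_neighborFinset_eq_degree, nsmul_eq_mul]

theorem lapMatrix_mulVec_intCast {R : Type*} [NonAssocRing R] (x : V → ℤ) :
    G.lapMatrix R *ᵥ (fun v => (x v : R)) = fun v => ((G.lapMatrix ℤ *ᵥ x) v : R) := by
  ext v
  simp only [lapMatrix_mulVec_apply]
  push_cast
  rfl

theorem sum_lapMatrix_mulVec_eq_sum_boundary {R : Type*} [NonAssocRing R]
    (S : Finset V) (x : V → R) :
    ∑ u ∈ S, (G.lapMatrix R *ᵥ x) u = ∑ u ∈ S, ∑ w ∈ Sᶜ with G.Adj u w, (x u - x w) := by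
  have hswap : ∑ u ∈ S, ∑ w ∈ S with G.Adj u w, x w = ∑ u ∈ S, ∑ w ∈ S with G.Adj u w, x u := by
    simp only [Finset.sum_filter]
    rw [Finset.sum_comm]
    simp only [G.adj_comm]
  have hinner : ∑ u ∈ S, ∑ w ∈ S with G.Adj u w, (x u - x w) = 0 := by
    simp only [Finset.sum_sub_distrib, hswap, sub_self]
  calc ∑ u ∈ S, (G.lapMatrix R *ᵥ x) u
      = ∑ u ∈ S, ∑ w ∈ S with G.Adj u w, (x u - x w) +
          ∑ u ∈ S, ∑ w ∈ Sᶜ with G.Adj u w, (x u - x w) := by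
        rw [← Finset.sum_add_distrib]
        refine Finset.sum_congr rfl fun u _ => ?_
        rw [lapMatrix_mulVec_apply_eq_sum_sub, neighborFinset_eq_filter, Finset.sum_filter,
          Finset.sum_filter, Finset.sum_filter, Finset.sum_add_sum_compl]
    _ = _ := by rw [hinner, zero_add]

theorem sum_lapMatrix_mulVec_eq_sub_of_cut {R : Type*} [NonAssocRing R] {S : Finset V} {a b : V}
    (ha : a ∈ S) (hb : b ∉ S) (hab : G.Adj a b)
    (hcut : ∀ u ∈ S, ∀ w ∉ S, G.Adj u w → u = a ∧ w = b) (x : V → R) :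
    ∑ u ∈ S, (G.lapMatrix R *ᵥ x) u = x a - x b := by
  have hboundary_a : {w ∈ Sᶜ | G.Adj a w} = {b} := by
    ext w
    simp only [Finset.mem_filter, Finset.mem_compl, Finset.mem_singleton]
    exact ⟨fun ⟨hw, haw⟩ => (hcut a ha w hw haw).2, by rintro rfl; exact ⟨hb, hab⟩⟩
  rw [sum_lapMatrix_mulVec_eq_sum_boundary, Finset.sum_eq_single_of_mem a ha, hboundary_a,
    Finset.sum_singleton]
  intro u hu hua
  refine Finset.sum_eq_zero fun w hw => ?_
  rw [Finset.mem_filter, Finset.mem_compl] at hw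
  exact absurd (hcut u hu w hw.1 hw.2).1 hua

variable {G}

theorem dvd_sub_of_isBridge {R : Type*} [CommRing R] {μ : R} {x : V → R}
    (hx : G.lapMatrix R *ᵥ x = μ • x) {a b : V} (hab : G.Adj a b) (hbr : G.IsBridge s(a, b)) :
    μ ∣ x a - x b := by
  obtain ⟨S, ha, hb, hcut⟩ := hbr.exists_finset_cut
  refine ⟨∑ u ∈ S, x u, ?_⟩
  rw [← G.sum_lapMatrix_mulVec_eq_sub_of_cut ha hb hab hcut, hx, Finset.mul_sum]
  rfl

theorem IsAcyclic.dvd_sub_of_reachable {R : Type*} [CommRing R] (hG : G.IsAcyclic) {μ : R}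
    {x : V → R} (hx : G.lapMatrix R *ᵥ x = μ • x) {u v : V} (huv : G.Reachable u v) :
    μ ∣ x u - x v := by
  rw [reachable_iff_reflTransGen] at huv
  induction huv with
  | refl => simp
  | tail _ hadj ih =>
    rw [← sub_add_sub_cancel]
    exact dvd_add ih (dvd_sub_of_isBridge hx hadj (isAcyclic_iff_forall_adj_isBridge.mp hG hadj))

end SimpleGraph

theorem tree_int_eigenvector_general {V : Type*} [Fintype V] [DecidableEq V]
    (T : SimpleGraph V) (ht : T.IsTree)
    (μ : ℤ) (x : V → ℤ)
    (heig : lapR T *ᵥ (fun v => (x v : ℝ)) = (μ : ℝ) • (fun v => (x v : ℝ))) :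
    ∀ u v : V, μ ∣ (x u - x v) := by
  let _ := Classical.decRel T.Adj
  have hZ : T.lapMatrix ℤ *ᵥ x = μ • x := by
    ext v
    have hv := congrFun heig v
    rw [lapR, T.lapMatrix_mulVec_intCast] at hv
    simp only [Pi.smul_apply, smul_eq_mul] at hv ⊢
    exact_mod_cast hv
  exact fun u v => ht.isAcyclic.dvd_sub_of_reachable hZ (ht.connected.preconnected u v)

/-- On a tree, for an integer Laplacian eigenvalue `μ` and an
integer eigenvector `x`, the difference of any two entries of `x` is divisible
by `μ`. -/
theorem tree_int_eigenvector {V : Type*} [Fintype V] [DecidableEq V]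
    (T : SimpleGraph V) (ht : T.IsTree)
    (μ : ℤ) (x : V → ℤ) (hx : x ≠ 0)
    (heig : lapR T *ᵥ (fun v => (x v : ℝ)) = (μ : ℝ) • (fun v => (x v : ℝ))) :
    ∀ u v : V, μ ∣ (x u - x v) :=
  tree_int_eigenvector_general T ht μ x heig
end
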